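/- arXiv:2502.08089 — 3 statements merged into one kernel-verified Lean document; each statement's English description precedes it below -/
import Mathlib

section
/- Fix n ≥ 1, an index i ∈ {1,…,n}, a real number s (playing the role of kΔt), unit vectors g₁,…,gₙ ∈ ℝ³, and vectors h₁,…,hₙ ∈ ℝ³ with gⱼᵀhⱼ = 0 for every j. Let w₁,…,wₙ ∈ {0,1} with wᵢ = 1. Define the (6n)×6 observability matrix Q whose block rows, for j = 1,…,n, are wⱼ·[P_{gⱼ}, s P_{gⱼ}] and wⱼ·[−hⱼgⱼᵀ, P_{gⱼ} − s hⱼgⱼᵀ], where P_{gⱼ} = I₃ − gⱼgⱼᵀ. Then Q has full column rank 6 if and only if there exists j with wⱼ = 1 such that gⱼ is not parallel to gᵢ. -/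
open Matrix

/-- The orthogonal projection matrix `P_g = I₃ − g gᵀ` associated with `g ∈ ℝ³`. -/
noncomputable def projMat (g : Fin 3 → ℝ) : Matrix (Fin 3) (Fin 3) ℝ :=
  (1 : Matrix (Fin 3) (Fin 3) ℝ) - vecMulVec g g

/-- The `(6n) × 6` observability matrix `Q` of the multi-observer bearing and
bearing-rate measurement system: for each observer `j`, the two block rows are
`wⱼ·[P_{gⱼ}, s P_{gⱼ}]` (bearing) and `wⱼ·[−hⱼgⱼᵀ, P_{gⱼ} − s hⱼgⱼᵀ]` (bearing rate).
Rows are indexed by `Fin n × (Fin 3 ⊕ Fin 3)` (observer, then bearing/rate block row),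
columns by `Fin 3 ⊕ Fin 3` (position block, velocity block). -/
noncomputable def obsMat (n : ℕ) (s : ℝ) (g h : Fin n → Fin 3 → ℝ) (w : Fin n → ℝ) :
    Matrix (Fin n × (Fin 3 ⊕ Fin 3)) (Fin 3 ⊕ Fin 3) ℝ :=
  fun p c =>
    match p.2, c with
    | Sum.inl r, Sum.inl c => w p.1 * projMat (g p.1) r c
    | Sum.inl r, Sum.inr c => w p.1 * (s * projMat (g p.1) r c)
    | Sum.inr r, Sum.inl c => w p.1 * (-(h p.1 r * g p.1 c))
    | Sum.inr r, Sum.inr c => w p.1 * (projMat (g p.1) r c - s * (h p.1 r * g p.1 c))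

/-- Summing a projection-matrix row against a vector. -/
lemma proj_sum (a y : Fin 3 → ℝ) (r : Fin 3) :
    ∑ c, projMat a r c * y c = y r - a r * ∑ c, a c * y c := by
  have key : ∀ c : Fin 3, projMat a r c * y c
      = (if r = c then y c else 0) - a r * (a c * y c) := by
    intro c
    by_cases hrc : r = c <;>
      simp [projMat, Matrix.one_apply, vecMulVec_apply, hrc] <;> ring
  simp only [key, Finset.sum_sub_distrib, Finset.sum_ite_eq, Finset.mem_univ, if_true,
    ← Finset.mul_sum]

/-- Two unit vectors with inner product one coincide. -/
lemma unit_eq_of_dot_one {a b : Fin 3 → ℝ} (ha : a ⬝ᵥ a = 1) (hb : b ⬝ᵥ b = 1)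
    (hab : a ⬝ᵥ b = 1) : a = b := by
  have h0 : (a - b) ⬝ᵥ (a - b) = 0 := by
    have hba : b ⬝ᵥ a = 1 := by rwa [dotProduct_comm]
    rw [sub_dotProduct, dotProduct_sub, dotProduct_sub, ha, hb, hba, hab]
    ring
  exact sub_eq_zero.mp (dotProduct_self_eq_zero.mp h0)

/-- A vector lying on two non-parallel unit directions is zero. -/
lemma two_dirs_zero {a b u : Fin 3 → ℝ} (ha : a ⬝ᵥ a = 1) (hb : b ⬝ᵥ b = 1)
    (h1 : b ≠ a) (h2 : b ≠ -a)
    (hua : ∀ r, u r = a r * (a ⬝ᵥ u)) (hub : ∀ r, u r = b r * (b ⬝ᵥ u)) :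
    u = 0 := by
  have hub' : u = (b ⬝ᵥ u) • b := funext fun r => by
    rw [hub r, Pi.smul_apply, smul_eq_mul]; ring
  have hua' : u = (a ⬝ᵥ u) • a := funext fun r => by
    rw [hua r, Pi.smul_apply, smul_eq_mul]; ring
  have hαβ : a ⬝ᵥ u = (b ⬝ᵥ u) * (a ⬝ᵥ b) := by
    conv_lhs => rw [hub']
    rw [dotProduct_smul, smul_eq_mul]
  have hβα : b ⬝ᵥ u = (a ⬝ᵥ u) * (b ⬝ᵥ a) := by
    conv_lhs => rw [hua']
    rw [dotProduct_smul, smul_eq_mul]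
  have hcomm : b ⬝ᵥ a = a ⬝ᵥ b := dotProduct_comm b a
  have hα0 : a ⬝ᵥ u = 0 := by
    by_contra hα
    have hself : a ⬝ᵥ u = ((a ⬝ᵥ b) * (a ⬝ᵥ b)) * (a ⬝ᵥ u) := by
      calc a ⬝ᵥ u = (b ⬝ᵥ u) * (a ⬝ᵥ b) := hαβ
        _ = ((a ⬝ᵥ u) * (b ⬝ᵥ a)) * (a ⬝ᵥ b) := by rw [← hβα]
        _ = ((a ⬝ᵥ b) * (a ⬝ᵥ b)) * (a ⬝ᵥ u) := by rw [hcomm]; ring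
    have hsq : (a ⬝ᵥ b) * (a ⬝ᵥ b) = 1 := by
      have h' : (1 - (a ⬝ᵥ b) * (a ⬝ᵥ b)) * (a ⬝ᵥ u) = 0 := by linarith [hself]
      rcases mul_eq_zero.mp h' with h'' | h''
      · linarith
      · exact absurd h'' hα
    rcases mul_self_eq_one_iff.mp hsq with hone | hneg
    · exact h1 (unit_eq_of_dot_one hb ha (by rw [hcomm]; exact hone))
    · have hnb : a ⬝ᵥ (-b) = 1 := by rw [dotProduct_neg]; linarith
      have hbb : (-b) ⬝ᵥ (-b) = 1 := by rw [neg_dotProduct, dotProduct_neg, neg_neg]; exact hb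
      have : a = -b := unit_eq_of_dot_one ha hbb hnb
      exact h2 (by rw [this, neg_neg])
  funext r
  rw [Pi.zero_apply, hua r, hα0, mul_zero]

/-- Bearing block rows of `Q ⬝ x`. -/
lemma obs_row1 (n : ℕ) (s : ℝ) (g h : Fin n → Fin 3 → ℝ) (w : Fin n → ℝ)
    (x : (Fin 3 ⊕ Fin 3) → ℝ) (j : Fin n) (r : Fin 3) :
    (obsMat n s g h w).mulVec x (j, Sum.inl r)
      = w j * ((x (Sum.inl r) + s * x (Sum.inr r))
          - g j r * ∑ c, g j c * (x (Sum.inl c) + s * x (Sum.inr c))) := by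
  have key : (obsMat n s g h w).mulVec x (j, Sum.inl r)
      = w j * ∑ c, projMat (g j) r c * (x (Sum.inl c) + s * x (Sum.inr c)) := by
    simp only [Matrix.mulVec, dotProduct, Fintype.sum_sum_type, obsMat, Finset.mul_sum,
      ← Finset.sum_add_distrib]
    exact Finset.sum_congr rfl fun c _ => by ring
  rw [key, proj_sum]

/-- Bearing-rate block rows of `Q ⬝ x`. -/
lemma obs_row2 (n : ℕ) (s : ℝ) (g h : Fin n → Fin 3 → ℝ) (w : Fin n → ℝ)
    (x : (Fin 3 ⊕ Fin 3) → ℝ) (j : Fin n) (r : Fin 3) :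
    (obsMat n s g h w).mulVec x (j, Sum.inr r)
      = w j * ((x (Sum.inr r) - g j r * ∑ c, g j c * x (Sum.inr c))
          - (∑ c, g j c * (x (Sum.inl c) + s * x (Sum.inr c))) * h j r) := by
  have key : (obsMat n s g h w).mulVec x (j, Sum.inr r)
      = w j * ((∑ c, projMat (g j) r c * x (Sum.inr c))
          - (∑ c, g j c * (x (Sum.inl c) + s * x (Sum.inr c))) * h j r) := by
    simp only [Matrix.mulVec, dotProduct, Fintype.sum_sum_type, obsMat, Finset.mul_sum,
      Finset.sum_mul, mul_sub, Finset.mul_sum, ← Finset.sum_add_distrib, mul_add,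
      ← Finset.sum_sub_distrib]
    exact Finset.sum_congr rfl fun c _ => by ring
  rw [key, proj_sum]

/-- Multi-observer observability condition: for unit bearing vectors `gⱼ`, bearing
rates `hⱼ` orthogonal to `gⱼ`, and information weights `wⱼ ∈ {0,1}` with `wᵢ = 1`,
the observability matrix `Q` has full column rank `6` if and only if there exists
an observer `j` with `wⱼ = 1` whose bearing vector `gⱼ` is not parallel to `gᵢ`. -/
theorem obsMat_rank_eq_six_iff (n : ℕ) (hn : 1 ≤ n) (i : Fin n) (s : ℝ)
    (g h : Fin n → Fin 3 → ℝ)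
    (hg : ∀ j, g j ⬝ᵥ g j = 1) (hgh : ∀ j, g j ⬝ᵥ h j = 0)
    (w : Fin n → ℝ) (hw : ∀ j, w j = 0 ∨ w j = 1) (hwi : w i = 1) :
    (obsMat n s g h w).rank = 6 ↔
      ∃ j, w j = 1 ∧ g j ≠ g i ∧ g j ≠ -(g i) := by
  set M := obsMat n s g h w with hM
  have card6 : Module.finrank ℝ ((Fin 3 ⊕ Fin 3) → ℝ) = 6 := by
    simp [Module.finrank_fintype_fun_eq_card]
  have hrk := LinearMap.finrank_range_add_finrank_ker M.mulVecLin
  rw [card6] at hrk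
  have key : M.rank = 6 ↔ ∀ x, M.mulVec x = 0 → x = 0 := by
    rw [show (∀ x, M.mulVec x = 0 → x = 0) ↔ LinearMap.ker M.mulVecLin = ⊥ by
      rw [LinearMap.ker_eq_bot']
      constructor <;> intro hh x hx <;> exact hh x (by simpa using hx)]
    rw [Matrix.rank]
    constructor
    · intro hr
      apply Submodule.finrank_eq_zero.mp
      omega
    · intro hk
      rw [hk, finrank_bot] at hrk
      omega
  rw [key]
  constructor
  · -- full rank → some non-parallel observer
    intro hker
    by_contra hcon
    push_neg at hcon
    have hpar : ∀ j, w j = 1 → g j = g i ∨ g j = -(g i) := by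
      intro j hj
      by_cases h1 : g j = g i
      · exact Or.inl h1
      · exact Or.inr (hcon j hj h1)
    -- the kernel vector (-s gᵢ, gᵢ)
    set x : (Fin 3 ⊕ Fin 3) → ℝ := Sum.elim (fun r => -(s * g i r)) (g i) with hx
    have hu : ∀ c, x (Sum.inl c) + s * x (Sum.inr c) = 0 := by
      intro c; simp [hx]
    have hMx : M.mulVec x = 0 := by
      funext rc
      obtain ⟨j, c⟩ := rc
      cases c with
      | inl r =>
        rw [obs_row1]
        simp [hu]
      | inr r =>
        rw [obs_row2]
        simp only [hu, Finset.sum_const_zero, zero_mul, sub_zero, mul_zero]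
        rcases hw j with h0 | h1
        · simp [h0]
        · have hgi1 : ∑ c, g i c * g i c = 1 := hg i
          rcases hpar j h1 with he | he
          · have : x (Sum.inr r) - g j r * ∑ c, g j c * x (Sum.inr c) = 0 := by
              simp only [hx, Sum.elim_inr, he, hgi1, mul_one, sub_self]
            rw [this, mul_zero, Pi.zero_apply]
          · have : x (Sum.inr r) - g j r * ∑ c, g j c * x (Sum.inr c) = 0 := by
              have hx' : ∀ c, x (Sum.inr c) = g i c := fun _ => rfl
              have hsum : ∑ c, g j c * g i c = -1 := by
                rw [he]
                simp only [Pi.neg_apply, neg_mul]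
                rw [Finset.sum_neg_distrib, hgi1]
              simp only [hx']
              rw [hsum, he]
              simp only [Pi.neg_apply]
              ring
            rw [this, mul_zero, Pi.zero_apply]
    have hx0 : x = 0 := hker x hMx
    have : g i = 0 := by
      funext r
      have := congrFun hx0 (Sum.inr r)
      simpa [hx] using this
    have : (0 : ℝ) = 1 := by
      rw [← hg i, this]
      simp [dotProduct]
    norm_num at this
  · -- some non-parallel observer → trivial kernel
    rintro ⟨j, hwj, hne1, hne2⟩ x hMx
    set u : Fin 3 → ℝ := fun c => x (Sum.inl c) + s * x (Sum.inr c) with hu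
    set v : Fin 3 → ℝ := fun c => x (Sum.inr c) with hv
    have row1 : ∀ (k : Fin n), w k = 1 → ∀ r, u r = g k r * (g k ⬝ᵥ u) := by
      intro k hk r
      have := congrFun hMx (k, Sum.inl r)
      rw [obs_row1] at this
      simp only [hk, one_mul, Pi.zero_apply] at this
      have : u r - g k r * (g k ⬝ᵥ u) = 0 := by
        simpa [hu, dotProduct] using this
      linarith
    have hu0 : u = 0 := two_dirs_zero (hg i) (hg j) hne1 hne2 (row1 i hwi) (row1 j hwj)
    have hgu : ∀ k : Fin n, ∑ c, g k c * (x (Sum.inl c) + s * x (Sum.inr c)) = 0 := by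
      intro k
      have : ∀ c, x (Sum.inl c) + s * x (Sum.inr c) = 0 := fun c => congrFun hu0 c
      simp [this]
    have row2 : ∀ (k : Fin n), w k = 1 → ∀ r, v r = g k r * (g k ⬝ᵥ v) := by
      intro k hk r
      have := congrFun hMx (k, Sum.inr r)
      rw [obs_row2] at this
      simp only [hk, one_mul, Pi.zero_apply, hgu k, zero_mul, sub_zero] at this
      have : v r - g k r * (g k ⬝ᵥ v) = 0 := by
        simpa [hv, dotProduct] using this
      linarith
    have hv0 : v = 0 := two_dirs_zero (hg i) (hg j) hne1 hne2 (row2 i hwi) (row2 j hwj)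
    funext c
    cases c with
    | inl r =>
      have h1 : x (Sum.inl r) + s * x (Sum.inr r) = 0 := congrFun hu0 r
      have h2 : x (Sum.inr r) = 0 := congrFun hv0 r
      rw [Pi.zero_apply]
      rw [h2] at h1
      linarith
    | inr r =>
      exact congrFun hv0 r
end

section
/- Fix n ≥ 1, a real number s, unit vectors g₁,…,gₙ ∈ ℝ³, vectors h₁,…,hₙ ∈ ℝ³, and weights w₁,…,wₙ ∈ {0,1}. Suppose all the unit vectors gⱼ with wⱼ = 1 are pairwise parallel (i.e., there is a unit vector g such that gⱼ = ±g whenever wⱼ = 1). Then the (6n)×6 matrix Q whose block rows, for j = 1,…,n, are wⱼ·[P_{gⱼ}, s P_{gⱼ}] and wⱼ·[−hⱼgⱼᵀ, P_{gⱼ} − s hⱼgⱼᵀ], where P_{gⱼ} = I₃ − gⱼgⱼᵀ, satisfies rank(Q) ≤ 5; in particular Q is not of full column rank. -/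
open Matrix

/-- If all the available bearing vectors (those with `wⱼ = 1`) are pairwise
parallel, i.e. there is a unit vector `u` with `gⱼ = ±u` whenever `wⱼ = 1`, then
the observability matrix `Q` satisfies `rank Q ≤ 5`; in particular `Q` is not of
full column rank `6`. -/
theorem obsMat_rank_le_five_of_parallel (n : ℕ) (hn : 1 ≤ n) (s : ℝ)
    (g h : Fin n → Fin 3 → ℝ) (hg : ∀ j, g j ⬝ᵥ g j = 1)
    (w : Fin n → ℝ) (hw : ∀ j, w j = 0 ∨ w j = 1)
    (hpar : ∃ u : Fin 3 → ℝ, u ⬝ᵥ u = 1 ∧ ∀ j, w j = 1 → (g j = u ∨ g j = -u)) :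
    (obsMat n s g h w).rank ≤ 5 ∧ (obsMat n s g h w).rank ≠ 6 := by
  obtain ⟨u, hu, hgu⟩ := hpar
  set Q := obsMat n s g h w with hQ
  -- the kernel vector
  set x : Fin 3 ⊕ Fin 3 → ℝ := Sum.elim (fun i => -s * u i) u with hx
  have hx0 : x ≠ 0 := by
    intro h0
    have hu0 : u = 0 := funext fun i => congrFun h0 (Sum.inr i)
    rw [hu0] at hu
    simp [dotProduct] at hu
  have hker : Q.mulVec x = 0 := by
    funext p
    obtain ⟨j, r⟩ := p
    -- key fact: w j • P_{g j} u = 0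
    have key : ∀ i : Fin 3, w j * (u i - g j i * (g j ⬝ᵥ u)) = 0 := by
      intro i
      rcases hw j with h0 | h1
      · rw [h0]; ring
      · rcases hgu j h1 with hgj | hgj
        · rw [hgj, hu]; ring
        · rw [hgj]
          have hneg : (-u) ⬝ᵥ u = -1 := by simp [neg_dotProduct, hu]
          rw [hneg]; simp
    cases r with
    | inl r =>
      show (∑ c, Q (j, Sum.inl r) c * x c) = 0
      rw [Fintype.sum_sum_type]
      simp only [hQ, obsMat, hx, Sum.elim_inl, Sum.elim_inr]
      rw [← Finset.sum_add_distrib]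
      apply Finset.sum_eq_zero
      intro c _
      ring
    | inr r =>
      show (∑ c, Q (j, Sum.inr r) c * x c) = 0
      rw [Fintype.sum_sum_type]
      simp only [hQ, obsMat, hx, Sum.elim_inl, Sum.elim_inr]
      have step : (∑ c, w j * (-(h j r * g j c)) * (-s * u c)) +
          (∑ c, w j * (projMat (g j) r c - s * (h j r * g j c)) * u c) =
          ∑ c, w j * (projMat (g j) r c * u c) := by
        rw [← Finset.sum_add_distrib]
        apply Finset.sum_congr rfl
        intro c _
        ring
      rw [step]
      have expand : (∑ c, w j * (projMat (g j) r c * u c)) =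
          w j * (u r - g j r * (g j ⬝ᵥ u)) := by
        simp only [projMat, Matrix.sub_apply, Matrix.one_apply, vecMulVec_apply, dotProduct,
          Finset.mul_sum]
        rw [← Finset.mul_sum]
        congr 1
        simp [sub_mul, Finset.sum_sub_distrib, ite_mul, mul_assoc]
      rw [expand, key r]
  -- rank-nullity
  have hrank : Q.rank + Module.finrank ℝ (LinearMap.ker Q.mulVecLin) = 6 := by
    have := LinearMap.finrank_range_add_finrank_ker Q.mulVecLin
    simpa [Matrix.rank] using this
  have hkpos : 0 < Module.finrank ℝ (LinearMap.ker Q.mulVecLin) := by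
    rw [Module.finrank_pos_iff]
    exact Submodule.nontrivial_iff_ne_bot.mpr (fun hbot => hx0 (by
      have : x ∈ LinearMap.ker Q.mulVecLin := by
        rw [LinearMap.mem_ker]
        simpa [Matrix.mulVecLin_apply] using hker
      rw [hbot] at this
      simpa using this))
  constructor
  · omega
  · omega
end

section
/- Let g₁, g₂ ∈ ℝ³ be unit vectors and let P_{gⱼ} = I₃ − gⱼgⱼᵀ. Then the 6×3 vertically stacked matrix [P_{g₁}; P_{g₂}] has rank 3 (full column rank) if and only if g₁ is not parallel to g₂; moreover, rank([P_{g₁}; P_{g₂}]) = rank(P_{g₁} + P_{g₂}). -/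
open Matrix

private lemma dp_self_nonneg (v : Fin 3 → ℝ) : 0 ≤ v ⬝ᵥ v :=
  Finset.sum_nonneg fun _ _ => mul_self_nonneg _

private lemma vmv_mulVec (a b x : Fin 3 → ℝ) : vecMulVec a b *ᵥ x = (b ⬝ᵥ x) • a := by
  funext i
  simp [vecMulVec_apply, mulVec, dotProduct, Finset.mul_sum, mul_comm, mul_left_comm]

private lemma isUnit_of_rank_eq (A : Matrix (Fin 3) (Fin 3) ℝ) (h : A.rank = 3) : IsUnit A := by
  rw [← Matrix.mulVec_surjective_iff_isUnit]
  have ht : LinearMap.range A.mulVecLin = ⊤ := by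
    apply Submodule.eq_top_of_finrank_eq
    rw [Matrix.rank] at h
    simp [h]
  intro y
  exact (LinearMap.range_eq_top.mp ht) y

private lemma vmv_transpose (g : Fin 3 → ℝ) : (vecMulVec g g)ᵀ = vecMulVec g g := by
  ext i j
  simp [vecMulVec_apply, mul_comm]

private lemma vmv_mul_vmv (g : Fin 3 → ℝ) (hg : g ⬝ᵥ g = 1) :
    vecMulVec g g * vecMulVec g g = vecMulVec g g := by
  ext i j
  simp only [mul_apply, vecMulVec_apply]
  have h : ∑ k, g i * g k * (g k * g j) = (g i * g j) * ∑ k, g k * g k := by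
    rw [Finset.mul_sum]; apply Finset.sum_congr rfl; intro k _; ring
  rw [h]
  simp only [dotProduct] at hg
  rw [hg, mul_one]

private lemma proj_idem (g : Fin 3 → ℝ) (hg : g ⬝ᵥ g = 1) :
    ((1 : Matrix (Fin 3) (Fin 3) ℝ) - vecMulVec g g) * (1 - vecMulVec g g)
      = 1 - vecMulVec g g := by
  rw [sub_mul, mul_sub, mul_sub, one_mul, mul_one, one_mul, vmv_mul_vmv g hg]
  abel

/-- For unit vectors `g₁, g₂ ∈ ℝ³` with `P_{gⱼ} = I₃ − gⱼ gⱼᵀ`, the `6 × 3`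
vertically stacked matrix `[P_{g₁}; P_{g₂}]` has full column rank `3` if and only
if `g₁` is not parallel to `g₂`; moreover its rank equals `rank (P_{g₁} + P_{g₂})`. -/
theorem rank_stacked_proj (g₁ g₂ : Fin 3 → ℝ)
    (hg₁ : g₁ ⬝ᵥ g₁ = 1) (hg₂ : g₂ ⬝ᵥ g₂ = 1) :
    ((Matrix.fromRows
        ((1 : Matrix (Fin 3) (Fin 3) ℝ) - vecMulVec g₁ g₁)
        ((1 : Matrix (Fin 3) (Fin 3) ℝ) - vecMulVec g₂ g₂)).rank = 3 ↔
      (g₁ ≠ g₂ ∧ g₁ ≠ -g₂)) ∧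
    (Matrix.fromRows
        ((1 : Matrix (Fin 3) (Fin 3) ℝ) - vecMulVec g₁ g₁)
        ((1 : Matrix (Fin 3) (Fin 3) ℝ) - vecMulVec g₂ g₂)).rank =
      (((1 : Matrix (Fin 3) (Fin 3) ℝ) - vecMulVec g₁ g₁) +
        ((1 : Matrix (Fin 3) (Fin 3) ℝ) - vecMulVec g₂ g₂)).rank := by
  set P₁ : Matrix (Fin 3) (Fin 3) ℝ := 1 - vecMulVec g₁ g₁ with hP₁
  set P₂ : Matrix (Fin 3) (Fin 3) ℝ := 1 - vecMulVec g₂ g₂ with hP₂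
  have hP₁t : P₁ᵀ = P₁ := by rw [hP₁, transpose_sub, transpose_one, vmv_transpose]
  have hP₂t : P₂ᵀ = P₂ := by rw [hP₂, transpose_sub, transpose_one, vmv_transpose]
  have hrank : (Matrix.fromRows P₁ P₂).rank = (P₁ + P₂).rank := by
    have h := Matrix.rank_transpose_mul_self (Matrix.fromRows P₁ P₂)
    rw [← h, transpose_fromRows, fromCols_mul_fromRows, hP₁t, hP₂t,
      proj_idem g₁ hg₁, proj_idem g₂ hg₂]
  refine ⟨?_, hrank⟩
  rw [hrank]
  have hmv : ∀ (g x : Fin 3 → ℝ), ((1 : Matrix (Fin 3) (Fin 3) ℝ) - vecMulVec g g) *ᵥ x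
      = x - (g ⬝ᵥ x) • g := by
    intro g x
    rw [Matrix.sub_mulVec, Matrix.one_mulVec, vmv_mulVec]
  have hg₁ne : g₁ ≠ 0 := by
    intro h; rw [h] at hg₁; simp [dotProduct] at hg₁
  constructor
  · -- rank = 3 → not parallel
    intro h3
    have hu := isUnit_of_rank_eq _ h3
    have hinj := Matrix.mulVec_injective_iff_isUnit.mpr hu
    constructor
    · rintro rfl
      have h0 : (P₁ + P₁) *ᵥ g₁ = (P₁ + P₁) *ᵥ 0 := by
        rw [Matrix.add_mulVec, hP₁, hmv, hg₁]
        simp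
      exact hg₁ne (hinj h0)
    · intro heq
      have h21 : g₂ ⬝ᵥ g₁ = -1 := by
        rw [dotProduct_comm, heq]; simp [hg₂]
      have h0 : (P₁ + P₂) *ᵥ g₁ = (P₁ + P₂) *ᵥ 0 := by
        rw [Matrix.add_mulVec, hP₁, hP₂, hmv, hmv, hg₁, h21, heq]
        simp
      exact hg₁ne (hinj h0)
  · -- not parallel → rank = 3
    rintro ⟨hne, hnne⟩
    have hker : ∀ x : Fin 3 → ℝ, (P₁ + P₂) *ᵥ x = 0 → x = 0 := by
      intro x hx
      by_contra hx0
      set c₁ := g₁ ⬝ᵥ x with hc₁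
      set c₂ := g₂ ⬝ᵥ x with hc₂
      have hsum : (x - c₁ • g₁) + (x - c₂ • g₂) = 0 := by
        rw [← hmv g₁ x, ← hmv g₂ x, ← Matrix.add_mulVec]
        exact hx
      have hnorm : ∀ (g : Fin 3 → ℝ), g ⬝ᵥ g = 1 →
          (x - (g ⬝ᵥ x) • g) ⬝ᵥ (x - (g ⬝ᵥ x) • g) = x ⬝ᵥ x - (g ⬝ᵥ x) ^ 2 := by
        intro g hg
        rw [dotProduct_sub, sub_dotProduct, sub_dotProduct, dotProduct_smul,
          smul_dotProduct, smul_dotProduct, dotProduct_smul, hg, dotProduct_comm x g]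
        simp only [smul_eq_mul]
        ring
      have hdot : (x ⬝ᵥ x - c₁ ^ 2) + (x ⬝ᵥ x - c₂ ^ 2) = 0 := by
        have h := congrArg (fun v => x ⬝ᵥ v) hsum
        simp only [dotProduct_add, dotProduct_sub, dotProduct_smul, dotProduct_zero,
          smul_eq_mul, dotProduct_comm x g₁, dotProduct_comm x g₂, ← hc₁, ← hc₂] at h
        nlinarith [h]
      have h1n := hnorm g₁ hg₁
      have h2n := hnorm g₂ hg₂
      rw [← hc₁] at h1n
      rw [← hc₂] at h2n
      have h1nn : (0:ℝ) ≤ x ⬝ᵥ x - c₁ ^ 2 := by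
        rw [← h1n]; exact dp_self_nonneg _
      have h2nn : (0:ℝ) ≤ x ⬝ᵥ x - c₂ ^ 2 := by
        rw [← h2n]; exact dp_self_nonneg _
      have hx1 : x - c₁ • g₁ = 0 :=
        dotProduct_self_eq_zero.mp (by rw [h1n]; linarith)
      have hx2 : x - c₂ • g₂ = 0 :=
        dotProduct_self_eq_zero.mp (by rw [h2n]; linarith)
      have hxg1 : x = c₁ • g₁ := by rwa [sub_eq_zero] at hx1
      have hxg2 : x = c₂ • g₂ := by rwa [sub_eq_zero] at hx2
      have hc₁0 : c₁ ≠ 0 := by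
        intro h; rw [h, zero_smul] at hxg1; exact hx0 hxg1
      have hxx1 : x ⬝ᵥ x = c₁ ^ 2 := by
        rw [hxg1, dotProduct_smul, smul_dotProduct, hg₁]; simp [sq]
      have hxx2 : x ⬝ᵥ x = c₂ ^ 2 := by
        rw [hxg2, dotProduct_smul, smul_dotProduct, hg₂]; simp [sq]
      have hfac : (c₁ - c₂) * (c₁ + c₂) = 0 := by nlinarith
      have heq12 : c₁ • g₁ = c₂ • g₂ := hxg1 ▸ hxg2
      rcases mul_eq_zero.mp hfac with h | h
      · have hcc : c₁ = c₂ := by linarith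
        rw [← hcc] at heq12
        exact hne (smul_right_injective _ hc₁0 heq12)
      · have hcc : c₂ = -c₁ := by linarith
        rw [hcc] at heq12
        have : c₁ • g₁ = c₁ • (-g₂) := by rw [heq12]; module
        exact hnne (smul_right_injective _ hc₁0 this)
    have hinj : Function.Injective ((P₁ + P₂).mulVec) := by
      intro x y hxy
      have h0 : (P₁ + P₂) *ᵥ (x - y) = 0 := by
        rw [Matrix.mulVec_sub, hxy, sub_self]
      have := hker _ h0
      rwa [sub_eq_zero] at this
    rw [Matrix.rank_of_isUnit _ (Matrix.mulVec_injective_iff_isUnit.mp hinj)]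
    simp
end
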